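/- arXiv:2006.00403 — 2 statements merged into one kernel-verified Lean document; each statement's English description precedes it below -/
import Mathlib

section
/- Let μ > 0 and λ ∈ [−1,0), and set b(τ) := μ(1+τ)^{−λ}. There exist constants c0 > 0, C > 0, K > 0 and T0 ≥ 0, depending only on μ and λ, with the following property: for every r with 0 ≤ r ≤ c0, every pair of times T0 ≤ s ≤ t, and every twice differentiable function y : ℝ → ℝ satisfying y″(τ) + r²·y(τ) + b(τ)·y′(τ) + b′(τ)·y(τ) = 0 for all τ ∈ [s,t] with initial data y(s) = 1 and y′(s) = 0, one has |y(t)| ≤ K·(b(s)/b(t))·exp( −C·r²·∫_s^t b(τ)^{−1} dτ ). -/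
/-!
With `z := y' + b y` the equation reads `z' = -r² y`. For large times and small `r` the cone
`0 ≤ -y' ≤ b y / 2` is forward invariant: on each of its faces the vector field points strictly
inward, which is where `b' ≤ b² / 8` and `r ≤ μ / 4` enter. Inside the cone `y ≤ 2 z / b` and
`(z · exp (r² ∫ b⁻¹))' = r² exp (r² ∫ b⁻¹) y' / b ≤ 0`, so
`|y t| ≤ 2 z t / b t ≤ 2 (b s / b t) exp (-r² ∫ₛᵗ b⁻¹)`.
-/

open Set Filter Topology Real

theorem eventually_nonneg_nhdsGT_of_hasDerivAt {f : ℝ → ℝ} {f' x : ℝ} (hf : HasDerivAt f f' x)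
    (hx : 0 ≤ f x) (hbd : f x = 0 → 0 < f') : ∀ᶠ σ in 𝓝[>] x, 0 ≤ f σ := by
  rcases hx.eq_or_lt with hzero | hpos
  · have hslope : Tendsto (slope f x) (𝓝[>] x) (𝓝 f') :=
      (hasDerivWithinAt_iff_tendsto_slope' self_notMem_Ioi).1 hf.hasDerivWithinAt
    filter_upwards [hslope.eventually (eventually_gt_nhds (hbd hzero.symm)),
      self_mem_nhdsWithin] with σ hσ hxσ
    exact (pos_of_slope_pos hxσ hσ hzero.symm).le
  · filter_upwards [nhdsWithin_le_nhds (hf.continuousAt.eventually (eventually_gt_nhds hpos))]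
      with σ hσ using hσ.le

theorem forall_nonneg_of_deriv_pos_of_eq_zero {ι : Type*} [Finite ι] {c c' : ι → ℝ → ℝ} {a b : ℝ}
    (hc : ∀ i, ∀ x ∈ Icc a b, HasDerivAt (c i) (c' i x) x) (ha : ∀ i, 0 ≤ c i a)
    (hbd : ∀ x ∈ Ico a b, (∀ j, 0 ≤ c j x) → ∀ i, c i x = 0 → 0 < c' i x) :
    ∀ x ∈ Icc a b, ∀ i, 0 ≤ c i x := by
  have hcont : ContinuousOn (fun x i => c i x) (Icc a b) :=
    continuousOn_pi.2 fun i x hx => (hc i x hx).continuousAt.continuousWithinAt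
  have hclosed : IsClosed ({x | ∀ i, 0 ≤ c i x} ∩ Icc a b) := by
    rw [inter_comm]
    exact hcont.preimage_isClosed_of_isClosed isClosed_Icc (isClosed_Ici (a := 0))
  refine fun x hx => hclosed.Icc_subset_of_forall_mem_nhdsWithin ha (fun x hx => ?_) hx
  exact eventually_all.2 fun i => eventually_nonneg_nhdsGT_of_hasDerivAt
    (hc i x (Ico_subset_Icc_self hx.2)) (hx.1 i) (hbd x hx.2 hx.1 i)

section DampedOde

variable {b b' y y' y'' : ℝ → ℝ} {r s t : ℝ}

theorem hasDerivAt_deriv_add_mul_of_ode {τ : ℝ} (hb : HasDerivAt b (b' τ) τ)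
    (hy : HasDerivAt y (y' τ) τ) (hy' : HasDerivAt y' (y'' τ) τ)
    (hode : y'' τ + r ^ 2 * y τ + b τ * y' τ + b' τ * y τ = 0) :
    HasDerivAt (fun σ => y' σ + b σ * y σ) (-(r ^ 2 * y τ)) τ :=
  (hy'.add (hb.mul hy)).congr_deriv (by linarith)

theorem neg_deriv_mem_Icc_of_ode {β : ℝ} (hβ : 0 < β)
    (hb : ∀ τ ∈ Icc s t, HasDerivAt b (b' τ) τ) (hy : ∀ τ ∈ Icc s t, HasDerivAt y (y' τ) τ)
    (hy' : ∀ τ ∈ Icc s t, HasDerivAt y' (y'' τ) τ)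
    (hode : ∀ τ ∈ Icc s t, y'' τ + r ^ 2 * y τ + b τ * y' τ + b' τ * y τ = 0)
    (hbβ : ∀ τ ∈ Icc s t, β ≤ b τ) (hb'_pos : ∀ τ ∈ Icc s t, 0 < r ^ 2 + b' τ)
    (hb'_lt : ∀ τ ∈ Icc s t, 4 * r ^ 2 + 2 * b' τ < b τ ^ 2) (hys : y s = 1) (hy's : y' s = 0) :
    ∀ τ ∈ Icc s t, -y' τ ∈ Icc 0 (b τ * y τ / 2) := by
  intro τ₀ hτ₀
  have hs : s ∈ Icc s t := left_mem_Icc.2 (hτ₀.1.trans hτ₀.2)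
  have hbs : 0 < b s := hβ.trans_le (hbβ s hs)
  set κ := 2 * r ^ 2 / β + 1
  -- The third constraint keeps `y' + b y`, hence `y`, positive in the region; this is what
  -- makes the derivatives on the first two faces strictly inward. Since `y ≤ 2 (y' + b y) / β`
  -- there, `κ > 2 r² / β` does the same for the third face.
  set c : Fin 3 → ℝ → ℝ :=
    ![fun τ => -y' τ, fun τ => b τ * y τ + 2 * y' τ,
      fun τ => y' τ + b τ * y τ - b s * exp (-κ * (τ - s))]
  set c' : Fin 3 → ℝ → ℝ :=
    ![fun τ => -y'' τ, fun τ => b' τ * y τ + b τ * y' τ + 2 * y'' τ,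
      fun τ => -(r ^ 2 * y τ) + κ * (b s * exp (-κ * (τ - s)))]
  have hc : ∀ i, ∀ τ ∈ Icc s t, HasDerivAt (c i) (c' i τ) τ := by
    intro i τ hτ
    fin_cases i
    · exact (hy' τ hτ).neg
    · exact ((hb τ hτ).mul (hy τ hτ)).add ((hy' τ hτ).const_mul 2) |>.congr_deriv
        (by simp [c'])
    · have hexp : HasDerivAt (fun σ => b s * exp (-κ * (σ - s)))
          (b s * (exp (-κ * (τ - s)) * (-κ * 1))) τ :=
        (((hasDerivAt_id τ).sub_const s).const_mul (-κ)).exp.const_mul (b s)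
      exact ((hasDerivAt_deriv_add_mul_of_ode (hb τ hτ) (hy τ hτ) (hy' τ hτ)
        (hode τ hτ)).sub hexp).congr_deriv (by simp [c']; ring)
  have hstart : ∀ i, 0 ≤ c i s := by
    intro i
    fin_cases i <;> simp [c, hys, hy's, hbs.le]
  have hbd : ∀ τ ∈ Ico s t, (∀ j, 0 ≤ c j τ) → ∀ i, c i τ = 0 → 0 < c' i τ := by
    intro τ hτ hall i hi
    have hτ' : τ ∈ Icc s t := Ico_subset_Icc_self hτ
    have hbτ : 0 < b τ := hβ.trans_le (hbβ τ hτ')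
    have hexp : 0 < b s * exp (-κ * (τ - s)) := mul_pos hbs (exp_pos _)
    have h0 : 0 ≤ -y' τ := hall 0
    have h1 : 0 ≤ b τ * y τ + 2 * y' τ := hall 1
    have h2 : b s * exp (-κ * (τ - s)) ≤ y' τ + b τ * y τ := sub_nonneg.1 (hall 2)
    have hyτ : 0 < y τ := pos_of_mul_pos_right (by linarith) hbτ.le
    have hode := hode τ hτ'
    fin_cases i
    · change -y' τ = 0 at hi
      show 0 < -y'' τ
      nlinarith [mul_pos (hb'_pos τ hτ') hyτ]
    · change b τ * y τ + 2 * y' τ = 0 at hi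
      show 0 < b' τ * y τ + b τ * y' τ + 2 * y'' τ
      nlinarith [mul_pos hyτ (sub_pos.2 (hb'_lt τ hτ'))]
    · change y' τ + b τ * y τ - b s * exp (-κ * (τ - s)) = 0 at hi
      show 0 < -(r ^ 2 * y τ) + κ * (b s * exp (-κ * (τ - s)))
      have hyβ : y τ ≤ 2 * (y' τ + b τ * y τ) / β := by
        rw [le_div_iff₀ hβ]; nlinarith [hbβ τ hτ']
      have hκ : κ * (y' τ + b τ * y τ) =
          r ^ 2 * (2 * (y' τ + b τ * y τ) / β) + (y' τ + b τ * y τ) := by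
        simp only [κ]; ring
      rw [← sub_eq_zero.1 hi, hκ]
      linarith [mul_le_mul_of_nonneg_left hyβ (sq_nonneg r)]
  have h := forall_nonneg_of_deriv_pos_of_eq_zero hc hstart hbd τ₀ hτ₀
  have h0 : 0 ≤ -y' τ₀ := h 0
  have h1 : 0 ≤ b τ₀ * y τ₀ + 2 * y' τ₀ := h 1
  exact ⟨h0, by linarith⟩

theorem antitoneOn_deriv_add_mul_mul_exp_integral_inv
    (hb : ∀ τ ∈ Icc s t, HasDerivAt b (b' τ) τ) (hb_pos : ∀ τ ∈ Icc s t, 0 < b τ)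
    (hy : ∀ τ ∈ Icc s t, HasDerivAt y (y' τ) τ) (hy' : ∀ τ ∈ Icc s t, HasDerivAt y' (y'' τ) τ)
    (hode : ∀ τ ∈ Icc s t, y'' τ + r ^ 2 * y τ + b τ * y' τ + b' τ * y τ = 0)
    (hy'_nonpos : ∀ τ ∈ Icc s t, y' τ ≤ 0) :
    AntitoneOn (fun τ => (y' τ + b τ * y τ) * exp (r ^ 2 * ∫ σ in s..τ, (b σ)⁻¹)) (Icc s t) := by
  set F := fun τ => ∫ σ in s..τ, (b σ)⁻¹
  have hb_inv : ContinuousOn (fun σ => (b σ)⁻¹) (Icc s t) :=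
    ContinuousOn.inv₀ (fun τ hτ => (hb τ hτ).continuousAt.continuousWithinAt)
      fun τ hτ => (hb_pos τ hτ).ne'
  have hF_cont : ContinuousOn F (Icc s t) := by
    rcases le_or_gt s t with hst | hts
    · simpa [uIcc_of_le hst] using intervalIntegral.continuousOn_primitive_interval
        (f := fun σ => (b σ)⁻¹) (a := s) (b := t)
        (by simpa [uIcc_of_le hst] using hb_inv.integrableOn_Icc)
    · simp [Icc_eq_empty_of_lt hts]
  have hF : ∀ x ∈ Ioo s t, HasDerivAt F (b x)⁻¹ x := fun x hx =>
    intervalIntegral.integral_hasDerivAt_right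
      (hb_inv.mono (uIcc_of_le hx.1.le ▸ Icc_subset_Icc_right hx.2.le)).intervalIntegrable
      (ContinuousOn.stronglyMeasurableAtFilter isOpen_Ioo (hb_inv.mono Ioo_subset_Icc_self) x hx)
      (hb_inv.continuousAt (Icc_mem_nhds hx.1 hx.2))
  have hderiv : ∀ x ∈ Ioo s t, HasDerivAt
      (fun τ => (y' τ + b τ * y τ) * exp (r ^ 2 * F τ))
      (r ^ 2 * exp (r ^ 2 * F x) * y' x / b x) x := by
    intro x hx
    have hx' := Ioo_subset_Icc_self hx
    refine ((hasDerivAt_deriv_add_mul_of_ode (hb x hx') (hy x hx') (hy' x hx')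
      (hode x hx')).mul ((hF x hx).const_mul (r ^ 2)).exp).congr_deriv ?_
    field_simp [(hb_pos x hx').ne']
    ring
  refine antitoneOn_of_deriv_nonpos (convex_Icc s t) ?_ ?_ ?_
  · exact (ContinuousOn.add (fun τ hτ => (hy' τ hτ).continuousAt.continuousWithinAt)
      (ContinuousOn.mul (fun τ hτ => (hb τ hτ).continuousAt.continuousWithinAt)
        fun τ hτ => (hy τ hτ).continuousAt.continuousWithinAt)).mul
      (continuous_exp.comp_continuousOn (continuousOn_const.mul hF_cont))
  · rw [interior_Icc]
    exact fun x hx => (hderiv x hx).differentiableAt.differentiableWithinAt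
  · rw [interior_Icc]
    intro x hx
    rw [(hderiv x hx).deriv]
    exact div_nonpos_of_nonpos_of_nonneg
      (mul_nonpos_of_nonneg_of_nonpos (by positivity) (hy'_nonpos x (Ioo_subset_Icc_self hx)))
      (hb_pos x (Ioo_subset_Icc_self hx)).le

theorem abs_le_of_ode {β : ℝ} (hβ : 0 < β)
    (hb : ∀ τ ∈ Icc s t, HasDerivAt b (b' τ) τ) (hy : ∀ τ ∈ Icc s t, HasDerivAt y (y' τ) τ)
    (hy' : ∀ τ ∈ Icc s t, HasDerivAt y' (y'' τ) τ)
    (hode : ∀ τ ∈ Icc s t, y'' τ + r ^ 2 * y τ + b τ * y' τ + b' τ * y τ = 0)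
    (hbβ : ∀ τ ∈ Icc s t, β ≤ b τ) (hb'_pos : ∀ τ ∈ Icc s t, 0 < r ^ 2 + b' τ)
    (hb'_lt : ∀ τ ∈ Icc s t, 4 * r ^ 2 + 2 * b' τ < b τ ^ 2) (hys : y s = 1) (hy's : y' s = 0)
    (hst : s ≤ t) :
    |y t| ≤ 2 * (b s / b t) * exp (-(r ^ 2 * ∫ τ in s..t, (b τ)⁻¹)) := by
  have hb_pos : ∀ τ ∈ Icc s t, 0 < b τ := fun τ hτ => hβ.trans_le (hbβ τ hτ)
  have htrap := neg_deriv_mem_Icc_of_ode hβ hb hy hy' hode hbβ hb'_pos hb'_lt hys hy's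
  have hdecay := antitoneOn_deriv_add_mul_mul_exp_integral_inv hb hb_pos hy hy' hode
    (fun τ hτ => neg_nonneg.1 (htrap τ hτ).1) (left_mem_Icc.2 hst) (right_mem_Icc.2 hst) hst
  simp only [hys, hy's, intervalIntegral.integral_same, mul_zero, exp_zero, mul_one,
    zero_add] at hdecay
  have hbt := hb_pos t (right_mem_Icc.2 hst)
  obtain ⟨h0, h1⟩ := htrap t (right_mem_Icc.2 hst)
  have hyt : 0 ≤ y t := nonneg_of_mul_nonneg_right (by linarith) hbt
  calc |y t| = y t := abs_of_nonneg hyt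
    _ ≤ 2 * (y' t + b t * y t) / b t := by rw [le_div_iff₀ hbt]; linarith
    _ ≤ 2 * (b s / exp (r ^ 2 * ∫ τ in s..t, (b τ)⁻¹)) / b t := by
      gcongr
      rwa [le_div_iff₀ (exp_pos _)]
    _ = 2 * (b s / b t) * exp (-(r ^ 2 * ∫ τ in s..t, (b τ)⁻¹)) := by
      rw [exp_neg]; ring

end DampedOde

section PowerDamping

variable {μ p τ : ℝ}

theorem hasDerivAt_mul_one_add_rpow (hτ : -1 < τ) :
    HasDerivAt (fun σ => μ * (1 + σ) ^ p) (p * μ * (1 + τ) ^ (p - 1)) τ :=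
  (((hasDerivAt_id' τ).const_add 1).rpow_const (Or.inl (by linarith))).const_mul μ
    |>.congr_deriv (by ring)

theorem le_mul_one_add_rpow (hμ : 0 ≤ μ) (hp : 0 ≤ p) (hτ : 0 ≤ τ) : μ ≤ μ * (1 + τ) ^ p :=
  le_mul_of_one_le_right hμ (one_le_rpow (by linarith) hp)

theorem mul_mul_one_add_rpow_sub_one_le (hμ : 0 < μ) (hp₀ : 0 ≤ p) (hp₁ : p ≤ 1)
    (hτ : 8 / μ ≤ τ) : p * μ * (1 + τ) ^ (p - 1) ≤ (μ * (1 + τ) ^ p) ^ 2 / 8 := by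
  have h8 : 0 < 8 / μ := by positivity
  have hτ₀ : 0 < 1 + τ := by linarith
  have hB : μ ≤ μ * (1 + τ) ^ p := le_mul_one_add_rpow hμ.le hp₀ (by linarith)
  have hinv : (1 + τ)⁻¹ ≤ μ / 8 := by
    rw [inv_le_comm₀ hτ₀ (by positivity), inv_div]; linarith
  rw [rpow_sub_one hτ₀.ne']
  calc p * μ * ((1 + τ) ^ p / (1 + τ)) = p * (μ * (1 + τ) ^ p) * (1 + τ)⁻¹ := by ring
    _ ≤ 1 * (μ * (1 + τ) ^ p) * (μ / 8) := by gcongr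
    _ ≤ (μ * (1 + τ) ^ p) ^ 2 / 8 := by nlinarith

end PowerDamping

/-- Low-frequency upper bound on the Fourier multiplier `Φ₁ᵘ(t,s,r)` of the
damped wave equation `∂_t²u − Δu + ∂_t(b(t)u) = 0` with `b(τ) = μ(1+τ)^(−λ)`,
so that `b′(τ) = −λμ(1+τ)^(−λ−1)`. -/
theorem Phi1u_low_frequency_upper_bound
    (μ lam : ℝ) (hμ : 0 < μ) (hlam : lam ∈ Set.Ico (-1:ℝ) 0) :
    ∃ c0 > (0:ℝ), ∃ C > (0:ℝ), ∃ K > (0:ℝ), ∃ T0 ≥ (0:ℝ),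
      ∀ r : ℝ, 0 ≤ r → r ≤ c0 → ∀ s t : ℝ, T0 ≤ s → s ≤ t →
        ∀ y : ℝ → ℝ,
          (∀ τ : ℝ, DifferentiableAt ℝ y τ) →
          (∀ τ : ℝ, DifferentiableAt ℝ (deriv y) τ) →
          (∀ τ ∈ Set.Icc s t,
            deriv (deriv y) τ + r^2 * y τ + (μ * (1+τ)^(-lam)) * deriv y τ
              + (-lam * μ * (1+τ)^(-lam-1)) * y τ = 0) →
          y s = 1 → deriv y s = 0 →
          |y t| ≤ K * ((μ * (1+s)^(-lam)) / (μ * (1+t)^(-lam))) *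
            Real.exp (-C * r^2 * ∫ τ in s..t, (μ * (1+τ)^(-lam))⁻¹) := by
  obtain ⟨hlam₁, hlam₀⟩ := hlam
  refine ⟨μ / 4, by positivity, 1, one_pos, 2, two_pos, 8 / μ, by positivity, ?_⟩
  intro r hr₀ hr s t hs hst y hy hy' hode hys hy's
  have hτ : ∀ τ ∈ Icc s t, 8 / μ ≤ τ := fun τ hτ' => hs.trans hτ'.1
  have hτ₀ : ∀ τ ∈ Icc s t, 0 ≤ τ := fun τ hτ' => (div_pos (by norm_num) hμ).le.trans (hτ τ hτ')
  have hbμ : ∀ τ ∈ Icc s t, μ ≤ μ * (1 + τ) ^ (-lam) := fun τ hτ =>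
    le_mul_one_add_rpow hμ.le (by linarith) (hτ₀ τ hτ)
  have hb'_pos : ∀ τ ∈ Icc s t, 0 < r ^ 2 + -lam * μ * (1 + τ) ^ (-lam - 1) := fun τ hτ =>
    add_pos_of_nonneg_of_pos (sq_nonneg r)
      (mul_pos (mul_pos (by linarith) hμ) (rpow_pos_of_pos (by linarith [hτ₀ τ hτ]) _))
  have hb'_lt : ∀ τ ∈ Icc s t,
      4 * r ^ 2 + 2 * (-lam * μ * (1 + τ) ^ (-lam - 1)) < (μ * (1 + τ) ^ (-lam)) ^ 2 := by
    intro τ hτ'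
    have hb' := mul_mul_one_add_rpow_sub_one_le (p := -lam) hμ (by linarith) (by linarith)
      (hτ τ hτ')
    have hr' : r ^ 2 ≤ (μ / 4) ^ 2 := pow_le_pow_left₀ hr₀ hr 2
    nlinarith [mul_le_mul (hbμ τ hτ') (hbμ τ hτ') hμ.le (hμ.le.trans (hbμ τ hτ'))]
  have hbound := abs_le_of_ode hμ
    (fun τ hτ' => hasDerivAt_mul_one_add_rpow (by linarith [hτ₀ τ hτ']))
    (fun τ _ => (hy τ).hasDerivAt) (fun τ _ => (hy' τ).hasDerivAt) hode hbμ hb'_pos hb'_lt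
    hys hy's hst
  rwa [neg_one_mul, neg_mul]
end

section
/- Let μ > 0 and λ ∈ [−1,0), and set b(t) := μ(1+t)^{−λ}, so b′(t) = −λμ(1+t)^{−λ−1} ≥ 0. For a fixed r ≥ 0 define m_u(t) := r² − b(t)²/4 + b′(t)/2 and, where m_u(t) < 0, h(t) := √( b(t)²/4 − b′(t)/2 − r² ) = √(|m_u(t)|). Then for every ε ∈ (0,1/2) there exist constants C3 > 0, C4 > 0, C > 0 and T ≥ 0, depending only on μ, λ and ε, such that for all t ≥ T and all r ≥ 0 with h(t) ≥ ε·b(t) (the elliptic-zone condition), the two-sided estimate holds: −C4·r²/b(t) − C·(1+t)^{λ−2} ≤ h(t) + h′(t)/(2h(t)) − b(t)/2 ≤ −C3·r²/b(t) + C·(1+t)^{λ−2}, where h′(t) denotes the derivative of h at t (with r held fixed). -/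
/-!
Write `h² = b²/4 − b′/2 − r²`. Then `h − b/2 = −(b′/2 + r²)/(h + b/2)` and `h′ = (b b′ − b″)/(4h)`, so
`h + h′/(2h) − b/2 = −r²/(h + b/2) + b′(b′/2 + r²)(4h + b)/(8h²(h + b/2)²) − b″/(8h²)`:
the `b′/(2b)` hidden in `h − b/2` cancels against the leading part of `h′/(2h)`.
In the elliptic zone `εb ≤ h ≤ b/2` the first term lies between `−2r²/b` and `−r²/b`, and the other
two are non-negative. For `b = μ(1+t)^(−λ)` they are `O((1+t)^(λ−2))` up to a multiple
`O(b′/b²)` of `r²/b`, which is at most `r²/(2b)` once `t` is large.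
-/

open Real

/-- `h + h′/(2h) − b/2` when `h² = b²/4 − b₁/2 − r²` with `b₁ = b′` and `b₂ = b″`. -/
noncomputable def ellipticRemainder (b b₁ b₂ h : ℝ) : ℝ :=
  h + (b * b₁ - b₂) / (8 * h ^ 2) - b / 2

section

variable {b b₁ b₂ r h ε : ℝ}

theorem le_half_of_sq_eq (hb : 0 < b) (hb₁ : 0 ≤ b₁) (hsq : h ^ 2 = b ^ 2 / 4 - b₁ / 2 - r ^ 2) :
    h ≤ b / 2 := by
  nlinarith [sq_nonneg r, sq_nonneg (h + b / 2), sq_nonneg (h - b / 2)]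

theorem ellipticRemainder_eq (hb : 0 < b) (hh : 0 < h)
    (hsq : h ^ 2 = b ^ 2 / 4 - b₁ / 2 - r ^ 2) :
    ellipticRemainder b b₁ b₂ h
      = -(r ^ 2 / (h + b / 2))
        + b₁ * (b₁ / 2 + r ^ 2) * (4 * h + b) / (8 * h ^ 2 * (h + b / 2) ^ 2)
        - b₂ / (8 * h ^ 2) := by
  have hr : r ^ 2 = b ^ 2 / 4 - b₁ / 2 - h ^ 2 := by linarith
  have : h + b / 2 ≠ 0 := by positivity
  rw [ellipticRemainder, hr]
  field_simp
  ring

theorem neg_two_mul_div_le_ellipticRemainder (hb : 0 < b) (hh : 0 < h)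
    (hsq : h ^ 2 = b ^ 2 / 4 - b₁ / 2 - r ^ 2) (hb₁ : 0 ≤ b₁) (hb₂ : b₂ ≤ 0) :
    -2 * r ^ 2 / b ≤ ellipticRemainder b b₁ b₂ h := by
  rw [ellipticRemainder_eq hb hh hsq]
  have hr : r ^ 2 / (h + b / 2) ≤ r ^ 2 / (b / 2) :=
    div_le_div_of_nonneg_left (sq_nonneg r) (by positivity) (by linarith)
  have hmid : 0 ≤ b₁ * (b₁ / 2 + r ^ 2) * (4 * h + b) / (8 * h ^ 2 * (h + b / 2) ^ 2) := by
    have : 0 ≤ b₁ / 2 + r ^ 2 := by positivity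
    positivity
  have hlast : b₂ / (8 * h ^ 2) ≤ 0 := div_nonpos_of_nonpos_of_nonneg hb₂ (by positivity)
  have : -2 * r ^ 2 / b = -(r ^ 2 / (b / 2)) := by field_simp
  linarith

theorem ellipticRemainder_le (hε : 0 < ε) (hb : 0 < b) (hεh : ε * b ≤ h)
    (hsq : h ^ 2 = b ^ 2 / 4 - b₁ / 2 - r ^ 2) (hb₁ : 0 ≤ b₁) (hb₂ : b₂ ≤ 0) :
    ellipticRemainder b b₁ b₂ h
      ≤ -(r ^ 2 / b) + 3 * b₁ * (b₁ / 2 + r ^ 2) / (2 * ε ^ 2 * b ^ 3)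
        - b₂ / (8 * ε ^ 2 * b ^ 2) := by
  have hh : 0 < h := lt_of_lt_of_le (by positivity) hεh
  have hhb := le_half_of_sq_eq hb hb₁ hsq
  rw [ellipticRemainder_eq hb hh hsq]
  have hA : 0 ≤ b₁ * (b₁ / 2 + r ^ 2) := mul_nonneg hb₁ (by positivity)
  have hr : r ^ 2 / b ≤ r ^ 2 / (h + b / 2) :=
    div_le_div_of_nonneg_left (sq_nonneg r) (by positivity) (by linarith)
  have hmid : b₁ * (b₁ / 2 + r ^ 2) * (4 * h + b) / (8 * h ^ 2 * (h + b / 2) ^ 2)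
      ≤ b₁ * (b₁ / 2 + r ^ 2) * (3 * b) / (8 * (ε * b) ^ 2 * (b / 2) ^ 2) := by
    gcongr <;> linarith
  have hlast : -(b₂ / (8 * h ^ 2)) ≤ -(b₂ / (8 * (ε * b) ^ 2)) := by
    rw [neg_div', neg_div']
    gcongr
    linarith
  have hmid_eq : b₁ * (b₁ / 2 + r ^ 2) * (3 * b) / (8 * (ε * b) ^ 2 * (b / 2) ^ 2)
      = 3 * b₁ * (b₁ / 2 + r ^ 2) / (2 * ε ^ 2 * b ^ 3) := by
    field_simp
    ring
  have hlast_eq : b₂ / (8 * (ε * b) ^ 2) = b₂ / (8 * ε ^ 2 * b ^ 2) := by ring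
  linarith

theorem ellipticRemainder_bounds_of_powerLaw {l s : ℝ} (hl₀ : 0 ≤ l) (hl₁ : l ≤ 1)
    (hε : 0 < ε) (hs : 0 < s) (hb : 0 < b) (hlarge : 3 ≤ ε ^ 2 * b * s) (hεh : ε * b ≤ h)
    (hsq : h ^ 2 = b ^ 2 / 4 - b₁ / 2 - r ^ 2)
    (hb₁ : b₁ = l * b / s) (hb₂ : b₂ = l * (l - 1) * b / s ^ 2) :
    -2 * r ^ 2 / b ≤ ellipticRemainder b b₁ b₂ h ∧
      ellipticRemainder b b₁ b₂ h ≤ -(1 / 2) * r ^ 2 / b + 1 / (ε ^ 2 * b * s ^ 2) := by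
  have hb₁_nonneg : 0 ≤ b₁ := by rw [hb₁]; positivity
  have hb₂_nonpos : b₂ ≤ 0 := by
    have : l * (l - 1) ≤ 0 := by nlinarith
    rw [hb₂]
    exact div_nonpos_of_nonpos_of_nonneg (mul_nonpos_of_nonpos_of_nonneg this hb.le) (by positivity)
  refine ⟨neg_two_mul_div_le_ellipticRemainder hb (lt_of_lt_of_le (by positivity) hεh) hsq
    hb₁_nonneg hb₂_nonpos, ?_⟩
  have hbound := ellipticRemainder_le hε hb hεh hsq hb₁_nonneg hb₂_nonpos
  have hsplit : 3 * b₁ * (b₁ / 2 + r ^ 2) / (2 * ε ^ 2 * b ^ 3) - b₂ / (8 * ε ^ 2 * b ^ 2)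
      = (5 * l ^ 2 + l) / 8 * (1 / (ε ^ 2 * b * s ^ 2))
        + 3 * l / (ε ^ 2 * b * s) * (r ^ 2 / (2 * b)) := by
    subst hb₁ hb₂
    field_simp
    ring
  have hcoef₁ : (5 * l ^ 2 + l) / 8 ≤ 1 := by nlinarith
  have hcoef₂ : 3 * l / (ε ^ 2 * b * s) ≤ 1 := by
    rw [div_le_one (by positivity)]
    linarith
  have h₁ := mul_le_of_le_one_left (by positivity : (0:ℝ) ≤ 1 / (ε ^ 2 * b * s ^ 2)) hcoef₁
  have h₂ := mul_le_of_le_one_left (by positivity : (0:ℝ) ≤ r ^ 2 / (2 * b)) hcoef₂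
  have hsplit_rhs : -(1 / 2) * r ^ 2 / b = -(r ^ 2 / b) + r ^ 2 / (2 * b) := by ring
  linarith

end

theorem hasDerivAt_const_mul_one_add_rpow (c p : ℝ) {t : ℝ} (ht : 0 < 1 + t) :
    HasDerivAt (fun τ => c * (1 + τ) ^ p) (p * c * (1 + t) ^ (p - 1)) t := by
  have := (((hasDerivAt_id t).const_add 1).rpow_const (p := p) (Or.inl ht.ne')).const_mul c
  exact this.congr_deriv (by simp only [id_eq, one_mul]; ring)

theorem HasDerivAt.sq_div_four_sub_div_two {B B' : ℝ → ℝ} {b₁ b₂ t : ℝ}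
    (hB : HasDerivAt B b₁ t) (hB' : HasDerivAt B' b₂ t) (c : ℝ) :
    HasDerivAt (fun τ => B τ ^ 2 / 4 - B' τ / 2 - c) ((B t * b₁ - b₂) / 2) t := by
  refine (((hB.pow 2).div_const 4).sub (hB'.div_const 2) |>.sub_const c).congr_deriv ?_
  push_cast
  ring

theorem deriv_sqrt_div_two_sqrt {f : ℝ → ℝ} {f' t : ℝ} (hf : HasDerivAt f f' t) (hpos : 0 < f t) :
    deriv (fun τ => √(f τ)) t / (2 * √(f t)) = f' / (4 * f t) := by
  rw [(hf.sqrt hpos.ne').deriv, div_div]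
  congr 1
  linear_combination 4 * mul_self_sqrt hpos.le

theorem ellipticRemainder_eq_add_deriv_div {B B' h : ℝ → ℝ} {b₁ b₂ r t : ℝ}
    (hB : HasDerivAt B b₁ t) (hB' : HasDerivAt B' b₂ t)
    (hh : h = fun τ => √(B τ ^ 2 / 4 - B' τ / 2 - r ^ 2)) (hh₀ : 0 < h t) :
    ellipticRemainder (B t) b₁ b₂ (h t) = h t + deriv h t / (2 * h t) - B t / 2 := by
  subst hh
  have hpos := sqrt_pos.mp hh₀
  dsimp only
  rw [ellipticRemainder, deriv_sqrt_div_two_sqrt (hB.sq_div_four_sub_div_two hB' (r ^ 2)) hpos,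
    sq_sqrt hpos.le, div_div, ← mul_assoc]
  norm_num

/-- Elliptic-zone asymptotic estimate for the `u`-equation: with
`b(t) = μ(1+t)^(−λ)`, `b′(t) = −λμ(1+t)^(−λ−1)` and
`h(t) = √(b(t)²/4 − b′(t)/2 − r²)`, the quantity `h + h′/(2h) − b/2` is
comparable to `−r²/b(t)` up to an error `O((1+t)^(λ−2))` (no `b′/b` term). -/
theorem elliptic_zone_estimate_u
    (μ lam ε : ℝ) (hμ : 0 < μ) (hlam : lam ∈ Set.Ico (-1:ℝ) 0)
    (hε : ε ∈ Set.Ioo (0:ℝ) (1/2:ℝ)) :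
    ∃ C3 > (0:ℝ), ∃ C4 > (0:ℝ), ∃ C > (0:ℝ), ∃ T ≥ (0:ℝ),
      ∀ t : ℝ, T ≤ t → ∀ r : ℝ, 0 ≤ r →
        ∀ h : ℝ → ℝ,
          (h = fun τ =>
            Real.sqrt ((μ * (1+τ)^(-lam))^2/4 - (-lam * μ * (1+τ)^(-lam-1))/2 - r^2)) →
          ε * (μ * (1+t)^(-lam)) ≤ h t →
          (-C4 * r^2 / (μ * (1+t)^(-lam)) - C * (1+t)^(lam-2)
            ≤ h t + deriv h t / (2 * h t) - (μ * (1+t)^(-lam)) / 2) ∧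
          (h t + deriv h t / (2 * h t) - (μ * (1+t)^(-lam)) / 2
            ≤ -C3 * r^2 / (μ * (1+t)^(-lam)) + C * (1+t)^(lam-2)) := by
  obtain ⟨hlam₁, hlam₀⟩ := hlam
  have hε₀ : 0 < ε := hε.1
  have hεμ : 0 < ε ^ 2 * μ := by positivity
  refine ⟨1 / 2, by norm_num, 2, by norm_num, 1 / (ε ^ 2 * μ), by positivity,
    3 / (ε ^ 2 * μ), by positivity, fun t ht r _ h hh hεh => ?_⟩
  have hs₁ : 1 ≤ 1 + t := by linarith [show 0 ≤ 3 / (ε ^ 2 * μ) by positivity]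
  have hs₀ : 0 < 1 + t := by linarith
  have hh₀ : 0 < h t := lt_of_lt_of_le (by positivity) hεh
  have hsq : h t ^ 2 = (μ * (1 + t) ^ (-lam)) ^ 2 / 4 - -lam * μ * (1 + t) ^ (-lam - 1) / 2 - r ^ 2 := by
    rw [hh] at hh₀ ⊢
    exact sq_sqrt (sqrt_pos.mp hh₀).le
  rw [← ellipticRemainder_eq_add_deriv_div (hasDerivAt_const_mul_one_add_rpow μ (-lam) hs₀)
    (hasDerivAt_const_mul_one_add_rpow (-lam * μ) (-lam - 1) hs₀) hh hh₀]
  set s := 1 + t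
  set b := μ * s ^ (-lam) with hb_def
  have hb : 0 < b := by positivity
  have hb₁ : -lam * μ * s ^ (-lam - 1) = -lam * b / s := by rw [rpow_sub_one hs₀.ne']; ring
  have hb₂ : (-lam - 1) * (-lam * μ) * s ^ (-lam - 1 - 1) = -lam * (-lam - 1) * b / s ^ 2 := by
    rw [hb_def, rpow_sub_one hs₀.ne', rpow_sub_one hs₀.ne']; field_simp
  have hrate : 1 / (ε ^ 2 * μ) * s ^ (lam - 2) = 1 / (ε ^ 2 * b * s ^ 2) := by
    rw [hb_def, rpow_neg hs₀.le, rpow_sub hs₀, rpow_two]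
    field_simp
  have hlarge : 3 ≤ ε ^ 2 * b * s := by
    have hμb : μ ≤ b := le_mul_of_one_le_right hμ.le (one_le_rpow hs₁ (by linarith))
    have := (div_le_iff₀ hεμ).mp ht
    nlinarith
  obtain ⟨hlower, hupper⟩ := ellipticRemainder_bounds_of_powerLaw (by linarith) (by linarith)
    hε₀ hs₀ hb hlarge hεh hsq hb₁ (hb₂.trans (by ring))
  rw [hrate]
  have : 0 ≤ 1 / (ε ^ 2 * b * s ^ 2) := by positivity
  exact ⟨by linarith, hupper⟩
end
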